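/- Let P(t) = a_0 + a_1(t + t^{-1}) + ... + a_d(t^d + t^{-d}) be a palindromic Laurent polynomial with real coefficients. If the strict inequality |a_j| > |a_0|·cos(π/(⌊d/j⌋ + 2)) holds for some j ∈ {1,...,d}, then P has a zero of odd order on the complex unit circle. -/

import Mathlib

/-!
On the unit circle, `t^d·P(t)` is `e^{idθ}·Q(θ)` with the real trigonometric polynomial
`Q(θ) = a₀ + 2∑ aⱼ cos(jθ)` (`palTrig a d`). Shifting `a₀` by any `s` with
`|s| ≤ |a_j| - |a₀|·cos(π/(⌊d/j⌋+2))` preserves the Konvalina–Matache hypothesis, so `Q` takes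
the value `-s`; in particular `Q` takes both signs. If every zero `e^{iθ₀}` had even order `m`,
the half-angle factorisation `e^{iθ} - e^{iθ₀} = 2i·e^{i(θ+θ₀)/2}·sin((θ-θ₀)/2)` would write `Q`
near `θ₀` as `sin((θ-θ₀)/2)^m` times a non-vanishing continuous function, so `Q` would be of one
sign near every point. By connectedness of `ℝ`, `Q` would then vanish on an open set, hence
everywhere, since it is real analytic.
-/

open Polynomial

/-- The polynomial `t^d · P(t)` for the palindromic real Laurent polynomial
`P(t) = a₀ + a₁(t + t⁻¹) + ⋯ + a_d(t^d + t^{-d})`, viewed over ℂ. -/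
noncomputable def palPolyR (a : ℕ → ℝ) (d : ℕ) : Polynomial ℂ :=
  C (a 0 : ℂ) * X ^ d + ∑ j ∈ Finset.Icc 1 d, C (a j : ℂ) * (X ^ (d + j) + X ^ (d - j))

open Complex Filter Topology Set
open scoped Real

theorem AnalyticOnNhd.nonneg_or_nonpos_of_forall_eventually {f : ℝ → ℝ}
    (hf : AnalyticOnNhd ℝ f univ)
    (h : ∀ x, (∀ᶠ y in 𝓝 x, 0 ≤ f y) ∨ ∀ᶠ y in 𝓝 x, f y ≤ 0) :
    (∀ x, 0 ≤ f x) ∨ ∀ x, f x ≤ 0 := by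
  by_contra! ⟨⟨x, hx⟩, ⟨y, hy⟩⟩
  have hcont : Continuous f := continuous_iff_continuousAt.2 fun x => (hf x trivial).continuousAt
  obtain ⟨z, -, hzU, hzV⟩ := isPreconnected_univ (interior {y | 0 ≤ f y})
    (interior {y | f y ≤ 0}) isOpen_interior isOpen_interior
    (fun z _ => (h z).imp mem_interior_iff_mem_nhds.2 mem_interior_iff_mem_nhds.2)
    ⟨y, trivial, mem_interior_iff_mem_nhds.2 <|
      (continuousAt_const.eventually_lt hcont.continuousAt hy).mono fun _ => le_of_lt⟩
    ⟨x, trivial, mem_interior_iff_mem_nhds.2 <|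
      (hcont.continuousAt.eventually_lt continuousAt_const hx).mono fun _ => le_of_lt⟩
  have hzero : f =ᶠ[𝓝 z] 0 := by
    filter_upwards [mem_interior_iff_mem_nhds.1 hzU, mem_interior_iff_mem_nhds.1 hzV]
      with t h₁ h₂ using le_antisymm h₂ h₁
  exact hx.ne <|
    hf.eqOn_zero_of_preconnected_of_eventuallyEq_zero isPreconnected_univ trivial hzero trivial

theorem eventually_nonneg_or_nonpos_of_ofReal_eq_pow_mul {f u : ℝ → ℝ} {R : ℝ → ℂ} {m : ℕ}
    {x : ℝ} (hm : Even m) (hR : ContinuousAt R x) (hRx : R x ≠ 0)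
    (hu : ∀ᶠ y in 𝓝[≠] x, u y ≠ 0) (hf : ∀ y, (f y : ℂ) = (u y : ℂ) ^ m * R y) :
    (∀ᶠ y in 𝓝 x, 0 ≤ f y) ∨ ∀ᶠ y in 𝓝 x, f y ≤ 0 := by
  have hre : ∀ y, f y = u y ^ m * (R y).re := fun y => by
    simpa [← ofReal_pow] using congrArg re (hf y)
  have him : ∀ y, u y ^ m * (R y).im = 0 := fun y => by
    simpa [← ofReal_pow] using (congrArg im (hf y)).symm
  -- `R` is real off `x`, hence also at `x` by continuity.
  have him_x : (R x).im = 0 := by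
    refine tendsto_nhds_unique (f := fun y => (R y).im) (l := 𝓝[≠] x)
      ((continuous_im.continuousAt.comp hR).mono_left nhdsWithin_le_nhds)
      (tendsto_const_nhds.congr' ?_)
    filter_upwards [hu] with y hy
    exact ((mul_eq_zero.1 (him y)).resolve_left (pow_ne_zero _ hy)).symm
  have hre_x : (R x).re ≠ 0 := fun h => hRx (Complex.ext h him_x)
  have hR_re : ContinuousAt (fun y => (R y).re) x := continuous_re.continuousAt.comp hR
  rcases hre_x.lt_or_gt with hneg | hpos
  · refine .inr ((hR_re.eventually_lt continuousAt_const hneg).mono fun y hy => ?_)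
    rw [hre]
    exact mul_nonpos_of_nonneg_of_nonpos (hm.pow_nonneg _) hy.le
  · refine .inl ((continuousAt_const.eventually_lt hR_re hpos).mono fun y hy => ?_)
    rw [hre]
    exact mul_nonneg (hm.pow_nonneg _) hy.le

theorem Real.eventually_sin_half_sub_ne_zero (x : ℝ) :
    ∀ᶠ y in 𝓝[≠] x, Real.sin ((y - x) / 2) ≠ 0 := by
  have hball : Ioo (x - 2 * π) (x + 2 * π) ∈ 𝓝 x :=
    Ioo_mem_nhds (by linarith [Real.pi_pos]) (by linarith [Real.pi_pos])
  filter_upwards [self_mem_nhdsWithin, nhdsWithin_le_nhds hball] with y hne ⟨h₁, h₂⟩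
  rw [Ne, Real.sin_eq_zero_iff_of_lt_of_lt (by linarith) (by linarith)]
  exact fun h => hne (by linarith : y = x)

theorem Complex.exp_mul_I_sub_exp_mul_I (x y : ℝ) :
    exp (x * I) - exp (y * I) = 2 * I * exp ((x + y) / 2 * I) * (Real.sin ((x - y) / 2) : ℂ) := by
  rw [ofReal_sin, Complex.sin]
  push_cast
  rw [show (x : ℂ) * I = (x + y) / 2 * I + (x - y) / 2 * I by ring,
    show (y : ℂ) * I = (x + y) / 2 * I + -((x - y) / 2) * I by ring, exp_add, exp_add]
  linear_combination (exp ((x + y) / 2 * I) *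
    (exp ((x - y) / 2 * I) - exp (-((x - y) / 2) * I))) * I_sq

noncomputable def palTrig (a : ℕ → ℝ) (d : ℕ) (θ : ℝ) : ℝ :=
  a 0 + ∑ j ∈ Finset.Icc 1 d, 2 * a j * Real.cos (j * θ)

theorem analyticOnNhd_palTrig (a : ℕ → ℝ) (d : ℕ) : AnalyticOnNhd ℝ (palTrig a d) univ := by
  intro θ _
  unfold palTrig
  fun_prop

theorem palTrig_update_zero (a : ℕ → ℝ) (d : ℕ) (s θ : ℝ) :
    palTrig (Function.update a 0 (a 0 + s)) d θ = palTrig a d θ + s := by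
  have hsum : ∀ j ∈ Finset.Icc 1 d, 2 * Function.update a 0 (a 0 + s) j * Real.cos (j * θ) =
      2 * a j * Real.cos (j * θ) := fun j hj => by
    rw [Function.update_of_ne (by grind)]
  rw [palTrig, palTrig, Finset.sum_congr rfl hsum, Function.update_self]
  ring

theorem eval_exp_mul_I_palPolyR (a : ℕ → ℝ) (d : ℕ) (θ : ℝ) :
    (palPolyR a d).eval (exp (θ * I)) = exp (d * θ * I) * palTrig a d θ := by
  have hpow : ∀ n : ℕ, exp (θ * I) ^ n = exp (n * θ * I) := fun n => by
    rw [← exp_nat_mul]; ring_nf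
  simp only [palPolyR, eval_add, eval_mul, eval_pow, eval_C, eval_X, eval_finsetSum, hpow,
    palTrig]
  push_cast
  rw [mul_add, Finset.mul_sum]
  congr 1
  · ring
  refine Finset.sum_congr rfl fun j hj => ?_
  rw [Nat.cast_sub (Finset.mem_Icc.1 hj).2, Complex.cos,
    show ((d : ℂ) + j) * θ * I = d * θ * I + j * θ * I by ring,
    show ((d : ℂ) - j) * θ * I = d * θ * I + -(j * θ * I) by ring, exp_add, exp_add,
    show -((j : ℂ) * θ) * I = -(j * θ * I) by ring]
  ring

theorem palPolyR_isRoot_exp_mul_I_iff (a : ℕ → ℝ) (d : ℕ) (θ : ℝ) :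
    (palPolyR a d).IsRoot (exp (θ * I)) ↔ palTrig a d θ = 0 := by
  rw [IsRoot, eval_exp_mul_I_palPolyR, mul_eq_zero, ofReal_eq_zero, or_iff_right (exp_ne_zero _)]

theorem palTrig_eventually_nonneg_or_nonpos {a : ℕ → ℝ} {d : ℕ} (hp : palPolyR a d ≠ 0)
    {θ₀ : ℝ} (heven : Even ((palPolyR a d).rootMultiplicity (exp (θ₀ * I)))) :
    (∀ᶠ θ in 𝓝 θ₀, 0 ≤ palTrig a d θ) ∨ ∀ᶠ θ in 𝓝 θ₀, palTrig a d θ ≤ 0 := by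
  set z₀ := exp (θ₀ * I)
  set m := (palPolyR a d).rootMultiplicity z₀
  set g := palPolyR a d /ₘ (X - C z₀) ^ m
  have hfac : (X - C z₀) ^ m * g = palPolyR a d := pow_mul_divByMonic_rootMultiplicity_eq _ z₀
  have hg : g.eval z₀ ≠ 0 := eval_divByMonic_pow_rootMultiplicity_ne_zero z₀ hp
  refine eventually_nonneg_or_nonpos_of_ofReal_eq_pow_mul (u := fun θ => Real.sin ((θ - θ₀) / 2))
    (R := fun θ => (2 * I) ^ m * exp ((m * ((θ + θ₀) / 2) - d * θ) * I) * g.eval (exp (θ * I)))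
    heven (by fun_prop) ?_ (Real.eventually_sin_half_sub_ne_zero θ₀) fun θ => ?_
  · exact mul_ne_zero (mul_ne_zero (pow_ne_zero _ (by simp)) (exp_ne_zero _)) hg
  · apply mul_left_cancel₀ (exp_ne_zero (d * θ * I))
    rw [← eval_exp_mul_I_palPolyR, ← hfac, eval_mul, eval_pow, eval_sub, eval_X, eval_C,
      exp_mul_I_sub_exp_mul_I, mul_pow, mul_pow, ← exp_nat_mul, sub_mul, exp_sub]
    field_simp

theorem exists_palTrig_eq_neg_of_isRoot {a : ℕ → ℝ} {d : ℕ} {s : ℝ} {z : ℂ} (hz : ‖z‖ = 1)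
    (hroot : (palPolyR (Function.update a 0 (a 0 + s)) d).IsRoot z) :
    ∃ θ, palTrig a d θ = -s := by
  rw [← norm_mul_exp_arg_mul_I z, hz, ofReal_one, one_mul, palPolyR_isRoot_exp_mul_I_iff,
    palTrig_update_zero] at hroot
  exact ⟨z.arg, eq_neg_of_add_eq_zero_left hroot⟩

theorem abs_add_mul_le_abs_mul_add_abs {x s c : ℝ} (hc : |c| ≤ 1) :
    |x + s| * c ≤ |x| * c + |s| := by
  have := abs_abs_sub_abs_le_abs_sub (x + s) x
  rw [add_sub_cancel_left] at this
  nlinarith [le_abs_self ((|x + s| - |x|) * c), abs_mul (|x + s| - |x|) c,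
    abs_nonneg (|x + s| - |x|)]

/-- Assuming the Konvalina–Matache theorem (a palindromic real Laurent polynomial with
`|b_i| ≥ |b₀|·cos(π/(⌊e/i⌋+2))` for some `1 ≤ i ≤ e` has a zero on the unit circle):
if the strict inequality `|a_j| > |a₀|·cos(π/(⌊d/j⌋+2))` holds for some `1 ≤ j ≤ d`,
then `P` has a zero of odd order on the complex unit circle. -/
theorem stmt_1 (a : ℕ → ℝ) (d j : ℕ) (hj1 : 1 ≤ j) (hjd : j ≤ d)
    (hKM : ∀ (b : ℕ → ℝ) (e i : ℕ), 1 ≤ i → i ≤ e →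
      |b i| ≥ |b 0| * Real.cos (Real.pi / ((e / i : ℕ) + 2)) →
      ∃ z : ℂ, ‖z‖ = 1 ∧ (palPolyR b e).IsRoot z)
    (hineq : |a j| > |a 0| * Real.cos (Real.pi / ((d / j : ℕ) + 2))) :
    ∃ z : ℂ, ‖z‖ = 1 ∧ Odd ((palPolyR a d).rootMultiplicity z) := by
  set c := Real.cos (Real.pi / ((d / j : ℕ) + 2))
  set δ := |a j| - |a 0| * c
  have hδ : 0 < δ := sub_pos.2 hineq
  have hc : |c| ≤ 1 := Real.abs_cos_le_one _
  have hvalue : ∀ s, |s| ≤ δ → ∃ θ, palTrig a d θ = -s := fun s hs => by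
    have hKMs : |a j| ≥ |a 0 + s| * c := by
      linarith [abs_add_mul_le_abs_mul_add_abs (x := a 0) (s := s) hc]
    obtain ⟨z, hz, hroot⟩ := hKM (Function.update a 0 (a 0 + s)) d j hj1 hjd (by
      rwa [Function.update_self, Function.update_of_ne (by omega)])
    exact exists_palTrig_eq_neg_of_isRoot hz hroot
  obtain ⟨θ₁, hθ₁⟩ := hvalue δ (abs_of_pos hδ).le
  obtain ⟨θ₂, hθ₂⟩ := hvalue (-δ) (by rw [abs_neg, abs_of_pos hδ])
  have hp : palPolyR a d ≠ 0 := fun h => by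
    have := (palPolyR_isRoot_exp_mul_I_iff a d θ₁).1 (by simp [h])
    linarith
  by_contra! hodd
  have hsign := (analyticOnNhd_palTrig a d).nonneg_or_nonpos_of_forall_eventually fun θ =>
    palTrig_eventually_nonneg_or_nonpos hp (Nat.not_odd_iff_even.1 (hodd _ (by simp)))
  rcases hsign with h | h
  · linarith [h θ₁]
  · linarith [h θ₂]
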